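/- Let p ≥ 5 be a prime and let G = ⟨a,b,c⟩ be the relatively free group of nilpotency class 2 and exponent p on three generators (group 6.3.1, of order p^6). Then the number of conjugacy classes of G is p^4 + p^3 − p, and the automorphism group of G has order (p^3 − 1)(p^3 − p)(p^3 − p^2)p^9. -/

import Mathlib

/-- The commutator `u⁻¹v⁻¹uv`. -/
def fgComm {α : Type} (u v : FreeGroup α) : FreeGroup α := u⁻¹ * v⁻¹ * u * v

/-- The relator set for the largest class-2 exponent-`p` group on `n` generators
satisfying the extra relations `R`: we add all `p`-th powers and all triple commutators. -/
def classTwoRels (p n : ℕ) (R : Set (FreeGroup (Fin n))) : Set (FreeGroup (Fin n)) :=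
  R ∪ (Set.range fun w : FreeGroup (Fin n) => w ^ p) ∪
    {x | ∃ u v w : FreeGroup (Fin n), x = fgComm (fgComm u v) w}

/-- The largest class-2 exponent-`p` group on `n` generators satisfying the relations `R`. -/
def ClassTwoGroup (p n : ℕ) (R : Set (FreeGroup (Fin n))) : Type :=
  PresentedGroup (classTwoRels p n R)

instance (p n : ℕ) (R : Set (FreeGroup (Fin n))) : Group (ClassTwoGroup p n R) := by
  unfold ClassTwoGroup; infer_instance

/-- `H` is a class-3 descendant of `G` of order `p^9` with exponent `p`. -/
def IsClass3Descendant (p : ℕ) (G : Type) [Group G] (H : Type) [Group H] : Prop :=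
  Nat.card H = p ^ 9 ∧ Monoid.exponent H = p ∧
    (⊤ : Subgroup H).lowerCentralSeries 3 = ⊥ ∧ (⊤ : Subgroup H).lowerCentralSeries 2 ≠ ⊥ ∧
    Nonempty ((H ⧸ (⊤ : Subgroup H).lowerCentralSeries 2) ≃* G)

/-- The multiplication underlying a group structure. -/
def mulOfGroup {α : Type} (g : Group α) : Mul α := by letI := g; infer_instance

/-- `P` has exactly `k` isomorphism classes of groups satisfying it. -/
def IsIsoClassCount (P : (H : Type) → Group H → Prop) (k : ℕ) : Prop :=
  ∃ (H : Fin k → Type) (inst : (i : Fin k) → Group (H i)),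
    (∀ i, P (H i) (inst i)) ∧
    (∀ i j : Fin k, i ≠ j →
      ¬ Nonempty (@MulEquiv (H i) (H j) (mulOfGroup (inst i)) (mulOfGroup (inst j)))) ∧
    (∀ (K : Type) (instK : Group K), P K instK →
      ∃ i, Nonempty (@MulEquiv K (H i) (mulOfGroup instK) (mulOfGroup (inst i))))

/-- `G` has exactly `k` class-3 descendants of order `p^9` with exponent `p`,
up to isomorphism. -/
def DescendantCount (p : ℕ) (G : Type) [Group G] (k : ℕ) : Prop :=
  IsIsoClassCount (fun H inst => @IsClass3Descendant p G _ H inst) k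

/-!
Write `V = (ZMod p)³` and `β v w = (v₁w₀, v₂w₀, v₂w₁)`. The pairs `(v, z) ∈ V × V` with
`(v, z) * (w, z') = (v + w, z + z' + β v w)` form a group of class 2, and of exponent `p` for odd
`p`, because `(v, z) ^ p = (0, C(p, 2) • β v v)` and `p ∣ C(p, 2)`. In a class-2 group of exponent
`p`, collecting shows that `(v, z) ↦ x₀^v₀ x₁^v₁ x₂^v₂ ⁅x₁, x₀⁆^z₀ ⁅x₂, x₀⁆^z₁ ⁅x₂, x₁⁆^z₂` is a
homomorphism, so this group is the relatively free one, `G`.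

The commutator of `(v, z)` and `(w, z')` is `(0, β v w - β w v)`, which vanishes iff the cross
product `v × w` does, i.e. iff `v` and `w` are linearly dependent. So `G` has
`p⁶ (p³ + (p³ - 1) p)` commuting pairs, and this number is `k(G) · |G|`.

As `G` is finite and relatively free, its automorphisms correspond to its generating triples, and
a triple generates iff its images in `G / G' = V` form a basis: `|GL₃(𝔽_p)|` choices for those
images, and `p⁹` for the central coordinates.
-/

lemma Odd.dvd_choose_two {p : ℕ} (hp : Odd p) : p ∣ p.choose 2 :=
  ⟨(p - 1) / 2, by
    rw [Nat.choose_two_right, Nat.mul_div_assoc _ (Nat.Odd.sub_odd hp odd_one).two_dvd]⟩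

open scoped commutatorElement

@[ext] structure Heisenberg {V W : Type*} [AddCommGroup V] [AddCommGroup W] (β : V →+ V →+ W) where
  v : V
  z : W

namespace Heisenberg

variable {V W : Type*} [AddCommGroup V] [AddCommGroup W] {β : V →+ V →+ W}

instance : One (Heisenberg β) := ⟨⟨0, 0⟩⟩
instance : Mul (Heisenberg β) := ⟨fun g h => ⟨g.v + h.v, g.z + h.z + β g.v h.v⟩⟩
instance : Inv (Heisenberg β) := ⟨fun g => ⟨-g.v, -g.z + β g.v g.v⟩⟩

@[simp] lemma one_v : (1 : Heisenberg β).v = 0 := rfl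
@[simp] lemma one_z : (1 : Heisenberg β).z = 0 := rfl
@[simp] lemma mul_v (g h : Heisenberg β) : (g * h).v = g.v + h.v := rfl
@[simp] lemma mul_z (g h : Heisenberg β) : (g * h).z = g.z + h.z + β g.v h.v := rfl
@[simp] lemma inv_v (g : Heisenberg β) : g⁻¹.v = -g.v := rfl
@[simp] lemma inv_z (g : Heisenberg β) : g⁻¹.z = -g.z + β g.v g.v := rfl

instance : Group (Heisenberg β) where
  mul_assoc _ _ _ := by ext <;> simp <;> abel
  one_mul _ := by ext <;> simp
  mul_one _ := by ext <;> simp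
  inv_mul_cancel _ := by ext <;> simp

lemma pow_v (g : Heisenberg β) (n : ℕ) : (g ^ n).v = n • g.v := by
  induction n with
  | zero => simp
  | succ n ih => simp [pow_succ, ih, succ_nsmul]

lemma pow_z (g : Heisenberg β) (n : ℕ) :
    (g ^ n).z = n • g.z + n.choose 2 • β g.v g.v := by
  induction n with
  | zero => simp
  | succ n ih =>
    simp only [pow_succ, mul_z, ih, pow_v, map_nsmul, AddMonoidHom.nsmul_apply,
      Nat.choose_succ_succ, Nat.choose_one_right]
    simp only [succ_nsmul, add_nsmul]
    abel

lemma pow_eq_one {p : ℕ} (hp : Odd p) (hV : ∀ v : V, p • v = 0) (hW : ∀ w : W, p • w = 0)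
    (g : Heisenberg β) : g ^ p = 1 := by
  obtain ⟨m, hm⟩ := hp.dvd_choose_two
  ext
  · simp [pow_v, hV]
  · simp [pow_z, hW, hm, mul_nsmul']

lemma commutatorElement_eq (g h : Heisenberg β) :
    ⁅g, h⁆ = ⟨0, β g.v h.v - β h.v g.v⟩ := by
  ext
  · simp [commutatorElement_def]
  · simp [commutatorElement_def]
    abel

lemma commute_commutatorElement (g h k : Heisenberg β) : Commute ⁅g, h⁆ k := by
  rw [commutatorElement_eq]
  ext <;> simp [add_comm]

lemma commute_iff {g h : Heisenberg β} : Commute g h ↔ β g.v h.v = β h.v g.v := by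
  rw [Commute, SemiconjBy, Heisenberg.ext_iff]
  simp [add_comm h.v, add_comm h.z]

def equivProd : Heisenberg β ≃ V × W where
  toFun g := (g.v, g.z)
  invFun x := ⟨x.1, x.2⟩

instance [Finite V] [Finite W] : Finite (Heisenberg β) :=
  Finite.of_equiv _ equivProd.symm

lemma card : Nat.card (Heisenberg β) = Nat.card V * Nat.card W := by
  rw [Nat.card_congr equivProd, Nat.card_prod]

lemma card_commute :
    Nat.card {q : Heisenberg β × Heisenberg β // Commute q.1 q.2} =
      Nat.card {x : V × V // β x.1 x.2 = β x.2 x.1} * Nat.card (W × W) := by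
  rw [← Nat.card_prod]
  exact Nat.card_congr
    { toFun q := (⟨(q.1.1.v, q.1.2.v), commute_iff.1 q.2⟩, (q.1.1.z, q.1.2.z))
      invFun x := ⟨(⟨x.1.1.1, x.2.1⟩, ⟨x.1.1.2, x.2.2⟩), commute_iff.2 x.1.2⟩ }

open Subgroup in
lemma span_eq_top_of_closure_eq_top {R : Type*} [Ring R] [Module R V] {ι : Type*}
    {f : ι → Heisenberg β} (hf : closure (Set.range f) = ⊤) :
    Submodule.span R (Set.range fun i => (f i).v) = ⊤ := by
  set S := Submodule.span R (Set.range fun i => (f i).v)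
  let H : Subgroup (Heisenberg β) :=
    { carrier := {g | g.v ∈ S}
      mul_mem' := fun ha hb => S.add_mem ha hb
      one_mem' := S.zero_mem
      inv_mem' := fun ha => S.neg_mem ha }
  have hH : closure (Set.range f) ≤ H := by
    rw [closure_le]
    rintro _ ⟨i, rfl⟩
    exact Submodule.subset_span ⟨i, rfl⟩
  rw [hf] at hH
  exact eq_top_iff.2 fun v _ => hH (mem_top (⟨v, 0⟩ : Heisenberg β))

end Heisenberg

section ClassTwo

variable {G : Type*} [Group G]

lemma mul_pow_eq_of_mul_eq {a b c : G} (hca : Commute c a) (hba : b * a = a * b * c) (m : ℕ) :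
    b * a ^ m = a ^ m * b * c ^ m := by
  induction m with
  | zero => simp
  | succ m ih =>
    calc b * a ^ (m + 1) = a ^ m * (b * a) * c ^ m := by
          rw [pow_succ, ← mul_assoc, ih, mul_assoc _ _ a, (hca.pow_left m).eq]; group
      _ = a ^ (m + 1) * b * c ^ (m + 1) := by rw [hba]; group

lemma pow_mul_pow_eq_of_mul_eq {a b c : G} (hca : Commute c a) (hcb : Commute c b)
    (hba : b * a = a * b * c) (m n : ℕ) : b ^ n * a ^ m = a ^ m * b ^ n * c ^ (m * n) := by
  induction n with
  | zero => simp
  | succ n ih =>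
    calc b ^ (n + 1) * a ^ m = b ^ n * a ^ m * b * c ^ m := by
          rw [pow_succ, mul_assoc, mul_pow_eq_of_mul_eq hca hba]; group
      _ = a ^ m * b ^ (n + 1) * c ^ (m * (n + 1)) := by
          rw [ih, mul_assoc _ _ b, (hcb.pow_left _).eq]; group

lemma pow_mul_pow_swap_of_commute_commutatorElement (hG : ∀ a b c : G, Commute ⁅a, b⁆ c)
    (a b : G) (m n : ℕ) : b ^ n * a ^ m = a ^ m * b ^ n * ⁅b, a⁆ ^ (m * n) :=
  pow_mul_pow_eq_of_mul_eq (hG b a a) (hG b a b)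
    (by rw [← (hG b a _).eq, commutatorElement_def]; group) m n

end ClassTwo

section ZModPow

variable {p : ℕ} {G : Type*} [Group G]

/-- `g ^ t` for `t : ZMod p`, through the representative `t.val`; it is additive in `t` only
when `g ^ p = 1`. -/
def zmodPow (g : G) (t : ZMod p) : G := g ^ t.val

lemma zmodPow_zero (g : G) : zmodPow g (0 : ZMod p) = 1 := by simp [zmodPow]

lemma zmodPow_one [Fact (1 < p)] (g : G) : zmodPow g (1 : ZMod p) = g := by
  simp [zmodPow, ZMod.val_one]

lemma map_zmodPow {H : Type*} [Group H] (ψ : G →* H) (g : G) (t : ZMod p) :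
    ψ (zmodPow g t) = zmodPow (ψ g) t :=
  map_pow ψ g t.val

variable (hp : ∀ g : G, g ^ p = 1)
include hp

lemma zmodPow_add [NeZero p] (g : G) (s t : ZMod p) :
    zmodPow g (s + t) = zmodPow g s * zmodPow g t := by
  simp only [zmodPow]
  rw [ZMod.val_add, ← pow_eq_pow_mod _ (hp g), pow_add]

lemma zmodPow_mul_zmodPow_swap (hG : ∀ a b c : G, Commute ⁅a, b⁆ c) (a b : G) (s t : ZMod p) :
    zmodPow b t * zmodPow a s = zmodPow a s * zmodPow b t * zmodPow ⁅b, a⁆ (t * s) := by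
  simp only [zmodPow]
  rw [pow_mul_pow_swap_of_commute_commutatorElement hG, ZMod.val_mul, mul_comm t.val,
    ← pow_eq_pow_mod _ (hp _)]

end ZModPow

/-- Collecting `x₀^a₀ x₁^a₁ x₂^a₂ · x₀^b₀ x₁^b₁ x₂^b₂` in a class-2 group leaves the commutator
factor `⁅x₁, x₀⁆^(a₁b₀) ⁅x₂, x₀⁆^(a₂b₀) ⁅x₂, x₁⁆^(a₂b₁)` (see `Heis3.monomial_mul_monomial`). -/
def upperProd (p : ℕ) : (Fin 3 → ZMod p) →+ (Fin 3 → ZMod p) →+ (Fin 3 → ZMod p) :=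
  AddMonoidHom.mk'
    (fun v => AddMonoidHom.mk' (fun w => ![v 1 * w 0, v 2 * w 0, v 2 * w 1])
      fun w w' => by ext i; fin_cases i <;> simp [mul_add])
    fun v v' => AddMonoidHom.ext fun w => funext fun i => by fin_cases i <;> simp [add_mul]

lemma upperProd_apply {p : ℕ} (v w : Fin 3 → ZMod p) :
    upperProd p v w = ![v 1 * w 0, v 2 * w 0, v 2 * w 1] := rfl

abbrev Heis3 (p : ℕ) := Heisenberg (upperProd p)

namespace Heis3

variable {p : ℕ}

lemma pow_eq_one (hp : Odd p) (g : Heis3 p) : g ^ p = 1 :=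
  Heisenberg.pow_eq_one hp (fun v => by ext; simp) (fun v => by ext; simp) g

def gen (i : Fin 3) : Heis3 p := ⟨Pi.single i 1, 0⟩

section Lift

variable {G : Type*} [Group G]

def monomial (y : Fin 3 → G) (v : Fin 3 → ZMod p) : G :=
  zmodPow (y 0) (v 0) * zmodPow (y 1) (v 1) * zmodPow (y 2) (v 2)

def commutators (x : Fin 3 → G) : Fin 3 → G := ![⁅x 1, x 0⁆, ⁅x 2, x 0⁆, ⁅x 2, x 1⁆]

variable (hp : ∀ g : G, g ^ p = 1) (hG : ∀ a b c : G, Commute ⁅a, b⁆ c) (x : Fin 3 → G)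

include hG in
lemma commute_monomial_commutators (z : Fin 3 → ZMod p) (g : G) :
    Commute (monomial (commutators x) z) g := by
  have h (i : Fin 3) (t : ZMod p) : Commute (zmodPow (commutators x i) t) g := by
    fin_cases i <;> exact (hG _ _ g).pow_left _
  exact ((h 0 _).mul_left (h 1 _)).mul_left (h 2 _)

variable [NeZero p]

include hp in
lemma monomial_add {y : Fin 3 → G} (hy : ∀ i j, Commute (y i) (y j)) (v w : Fin 3 → ZMod p) :
    monomial y (v + w) = monomial y v * monomial y w := by
  have h (i j : Fin 3) (s t : ZMod p) : Commute (zmodPow (y i) s) (zmodPow (y j) t) :=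
    ((hy i j).pow_left _).pow_right _
  simp only [monomial, Pi.add_apply, zmodPow_add hp]
  rw [((h 2 0 _ _).mul_right (h 2 1 _ _)).mul_mul_mul_comm, (h 1 0 _ _).mul_mul_mul_comm]

include hp hG in
lemma monomial_mul_monomial (v w : Fin 3 → ZMod p) :
    monomial x v * monomial x w =
      monomial x (v + w) * monomial (commutators x) (upperProd p v w) := by
  have central (i j : Fin 3) (s : ZMod p) (g : G) : Commute (zmodPow ⁅x i, x j⁆ s) g :=
    (hG _ _ g).pow_left _
  simp only [monomial, commutators, upperProd_apply, Pi.add_apply, zmodPow_add hp]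
  set A := zmodPow (x 0) (v 0)
  set B := zmodPow (x 1) (v 1)
  set C := zmodPow (x 2) (v 2)
  set A' := zmodPow (x 0) (w 0)
  set B' := zmodPow (x 1) (w 1)
  set C' := zmodPow (x 2) (w 2)
  have hCA' : C * A' = A' * C * zmodPow ⁅x 2, x 0⁆ (v 2 * w 0) :=
    zmodPow_mul_zmodPow_swap hp hG _ _ _ _
  have hBA' : B * A' = A' * B * zmodPow ⁅x 1, x 0⁆ (v 1 * w 0) :=
    zmodPow_mul_zmodPow_swap hp hG _ _ _ _
  have hCB' : C * B' = B' * C * zmodPow ⁅x 2, x 1⁆ (v 2 * w 1) :=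
    zmodPow_mul_zmodPow_swap hp hG _ _ _ _
  calc A * B * C * (A' * B' * C')
      = A * B * (C * A') * B' * C' := by group
    _ = A * (B * A') * C * B' * C' * zmodPow ⁅x 2, x 0⁆ (v 2 * w 0) := by
        rw [hCA']; simp only [mul_assoc, (central 2 0 _ _).eq]
    _ = A * A' * B * (C * B') * C' * zmodPow ⁅x 1, x 0⁆ (v 1 * w 0) *
          zmodPow ⁅x 2, x 0⁆ (v 2 * w 0) := by
        rw [hBA']; simp only [mul_assoc, (central 1 0 _ _).eq]
    _ = A * A' * (B * B') * (C * C') * (zmodPow ⁅x 1, x 0⁆ (v 1 * w 0) *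
          zmodPow ⁅x 2, x 0⁆ (v 2 * w 0) * zmodPow ⁅x 2, x 1⁆ (v 2 * w 1)) := by
        rw [hCB']; simp only [mul_assoc, (central 2 1 _ _).eq]

def lift : Heis3 p →* G where
  toFun g := monomial x g.v * monomial (commutators x) g.z
  map_one' := by simp [monomial, zmodPow_zero]
  map_mul' g h := by
    have hc (i j : Fin 3) : Commute (commutators x i) (commutators x j) := by
      fin_cases i <;> exact hG _ _ _
    rw [(commute_monomial_commutators hG x g.z _).mul_mul_mul_comm, monomial_mul_monomial hp hG x,
      mul_assoc, ← monomial_add hp hc, ← monomial_add hp hc, add_comm (upperProd p _ _)]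
    rfl

lemma lift_gen [Fact (1 < p)] (i : Fin 3) : lift hp hG x (gen i) = x i := by
  fin_cases i <;> simp [lift, gen, monomial, zmodPow_zero, zmodPow_one]

lemma comp_lift {H : Type*} [Group H] (hpH : ∀ g : H, g ^ p = 1)
    (hH : ∀ a b c : H, Commute ⁅a, b⁆ c) (ψ : G →* H) :
    ψ.comp (lift hp hG x) = lift hpH hH (ψ ∘ x) := by
  ext g
  simp [lift, monomial, commutators, map_zmodPow, map_commutatorElement]

end Lift

lemma lift_gen_eq_id [Fact (1 < p)] (hodd : Odd p) :
    lift (pow_eq_one hodd) Heisenberg.commute_commutatorElement gen = MonoidHom.id (Heis3 p) := by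
  ext g i <;> fin_cases i <;>
    simp [lift, gen, monomial, commutators, zmodPow, Heisenberg.pow_v, Heisenberg.pow_z,
      Heisenberg.commutatorElement_eq, upperProd_apply, -ZMod.natCast_val, ZMod.natCast_zmod_val]

end Heis3

lemma map_fgComm {α : Type} {G : Type*} [Group G] (F : FreeGroup α →* G) (u v : FreeGroup α) :
    F (fgComm u v) = ⁅(F u)⁻¹, (F v)⁻¹⁆ := by
  simp [fgComm, commutatorElement_def]

lemma lift_eq_one_of_mem_classTwoRels {p n : ℕ} {G : Type*} [Group G]
    (hp : ∀ g : G, g ^ p = 1) (hG : ∀ a b c : G, Commute ⁅a, b⁆ c) (f : Fin n → G) :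
    ∀ r ∈ classTwoRels p n ∅, FreeGroup.lift f r = 1 := by
  rintro r ((hr | ⟨w, rfl⟩) | ⟨u, v, w, rfl⟩)
  · exact hr.elim
  · rw [map_pow, hp]
  · rw [map_fgComm, map_fgComm, commutatorElement_eq_one_iff_commute, Commute.inv_inv_iff]
    exact hG _ _ _

namespace ClassTwoGroup

variable {p n : ℕ} {R : Set (FreeGroup (Fin n))}

def mk : FreeGroup (Fin n) →* ClassTwoGroup p n R := PresentedGroup.mk _

def of (i : Fin n) : ClassTwoGroup p n R := mk (FreeGroup.of i)

lemma mk_surjective : Function.Surjective (mk : FreeGroup (Fin n) →* ClassTwoGroup p n R) :=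
  PresentedGroup.mk_surjective _

lemma mk_eq_one {r : FreeGroup (Fin n)} (hr : r ∈ classTwoRels p n R) :
    (mk r : ClassTwoGroup p n R) = 1 :=
  PresentedGroup.one_of_mem hr

lemma hom_ext {G : Type*} [Group G] {φ ψ : ClassTwoGroup p n R →* G}
    (h : ∀ i, φ (of i) = ψ (of i)) : φ = ψ :=
  PresentedGroup.ext h

lemma pow_eq_one (g : ClassTwoGroup p n R) : g ^ p = 1 := by
  obtain ⟨w, rfl⟩ := mk_surjective g
  rw [← map_pow]
  exact mk_eq_one (Or.inl (Or.inr ⟨w, rfl⟩))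

lemma commute_commutatorElement (a b c : ClassTwoGroup p n R) : Commute ⁅a, b⁆ c := by
  obtain ⟨u, rfl⟩ := mk_surjective a
  obtain ⟨v, rfl⟩ := mk_surjective b
  obtain ⟨w, rfl⟩ := mk_surjective c
  have h := mk_eq_one (p := p) (R := R) (Or.inr ⟨u⁻¹, v⁻¹, w, rfl⟩)
  rwa [map_fgComm, map_fgComm, commutatorElement_eq_one_iff_commute, Commute.inv_inv_iff,
    map_inv, map_inv, inv_inv, inv_inv] at h

def toGroup {G : Type*} [Group G] (hp : ∀ g : G, g ^ p = 1)
    (hG : ∀ a b c : G, Commute ⁅a, b⁆ c) (f : Fin n → G) : ClassTwoGroup p n ∅ →* G :=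
  PresentedGroup.toGroup (lift_eq_one_of_mem_classTwoRels hp hG f)

lemma toGroup_of {G : Type*} [Group G] (hp : ∀ g : G, g ^ p = 1)
    (hG : ∀ a b c : G, Commute ⁅a, b⁆ c) (f : Fin n → G) (i : Fin n) :
    toGroup hp hG f (of i) = f i :=
  PresentedGroup.toGroup.of _

def mulEquivHeis3 [Fact (1 < p)] (hp : Odd p) : ClassTwoGroup p 3 ∅ ≃* Heis3 p :=
  MonoidHom.toMulEquiv
    (toGroup (Heis3.pow_eq_one hp) Heisenberg.commute_commutatorElement Heis3.gen)
    (Heis3.lift pow_eq_one commute_commutatorElement of)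
    (hom_ext fun i => by
      rw [MonoidHom.comp_apply, MonoidHom.id_apply, toGroup_of, Heis3.lift_gen])
    (by
      rw [Heis3.comp_lift _ _ _ (Heis3.pow_eq_one hp) Heisenberg.commute_commutatorElement]
      convert Heis3.lift_gen_eq_id hp
      exact funext (toGroup_of _ _ _))

end ClassTwoGroup

def MulEquiv.conjClassesCongr {G H : Type*} [Group G] [Group H] (e : G ≃* H) :
    ConjClasses G ≃ ConjClasses H where
  toFun := ConjClasses.map e.toMonoidHom
  invFun := ConjClasses.map e.symm.toMonoidHom
  left_inv x := by
    obtain ⟨g, rfl⟩ := ConjClasses.mk_surjective x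
    exact congrArg ConjClasses.mk (e.symm_apply_apply g)
  right_inv x := by
    obtain ⟨g, rfl⟩ := ConjClasses.mk_surjective x
    exact congrArg ConjClasses.mk (e.apply_symm_apply g)

open Subgroup in
lemma card_mulAut_eq_card_generating {G ι : Type*} [Group G] [Finite G] {x : ι → G}
    (hx : closure (Set.range x) = ⊤) (hext : ∀ f : ι → G, ∃ φ : G →* G, ∀ i, φ (x i) = f i) :
    Nat.card (MulAut G) = Nat.card {f : ι → G // closure (Set.range f) = ⊤} := by
  refine Nat.card_eq_of_bijective (fun φ => ⟨φ ∘ x, ?_⟩) ⟨fun φ ψ h => ?_, fun ⟨f, hf⟩ => ?_⟩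
  · rw [Set.range_comp, ← MonoidHom.coe_coe, ← MonoidHom.map_closure, hx,
      map_top_of_surjective _ φ.surjective]
  · refine MulEquiv.toMonoidHom_injective (MonoidHom.eq_of_eqOn_dense hx ?_)
    rintro _ ⟨i, rfl⟩
    exact congrFun (congrArg Subtype.val h) i
  · obtain ⟨φ, hφ⟩ := hext f
    have hsurj : Function.Surjective φ := by
      rw [← MonoidHom.range_eq_top, eq_top_iff, ← hf, closure_le]
      rintro _ ⟨i, rfl⟩
      exact ⟨x i, hφ i⟩
    exact ⟨MulEquiv.ofBijective φ ⟨Finite.injective_iff_surjective.2 hsurj, hsurj⟩,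
      Subtype.ext (funext hφ)⟩

namespace Heis3

open Subgroup

variable {p : ℕ}

lemma eq_top_of_forall_exists_mem (H : Subgroup (Heis3 p))
    (hv : ∀ v, ∃ z, (⟨v, z⟩ : Heis3 p) ∈ H) : H = ⊤ := by
  have hcomm (v w : Fin 3 → ZMod p) :
      (⟨0, upperProd p v w - upperProd p w v⟩ : Heis3 p) ∈ H := by
    obtain ⟨z, hz⟩ := hv v
    obtain ⟨z', hz'⟩ := hv w
    rw [← Heisenberg.commutatorElement_eq ⟨v, z⟩ ⟨w, z'⟩, commutatorElement_def]
    exact mul_mem (mul_mem (mul_mem hz hz') (inv_mem hz)) (inv_mem hz')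
  have hcentre (z : Fin 3 → ZMod p) : (⟨0, z⟩ : Heis3 p) ∈ H := by
    have : (⟨0, z⟩ : Heis3 p) =
        ⟨0, upperProd p (z 0 • Pi.single 1 1) (Pi.single 0 1) -
          upperProd p (Pi.single 0 1) (z 0 • Pi.single 1 1)⟩ *
        ⟨0, upperProd p (z 1 • Pi.single 2 1) (Pi.single 0 1) -
          upperProd p (Pi.single 0 1) (z 1 • Pi.single 2 1)⟩ *
        ⟨0, upperProd p (z 2 • Pi.single 2 1) (Pi.single 1 1) -
          upperProd p (Pi.single 1 1) (z 2 • Pi.single 2 1)⟩ := by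
      ext i <;> fin_cases i <;> simp [upperProd_apply]
    rw [this]
    exact mul_mem (mul_mem (hcomm _ _) (hcomm _ _)) (hcomm _ _)
  refine eq_top_iff.2 fun ⟨v, z⟩ _ => ?_
  obtain ⟨z', hz'⟩ := hv v
  have : (⟨v, z⟩ : Heis3 p) = ⟨v, z'⟩ * ⟨0, z - z'⟩ := by ext <;> simp
  rw [this]
  exact mul_mem hz' (hcentre _)

variable [Fact p.Prime]

lemma upperProd_comm_iff (v w : Fin 3 → ZMod p) :
    upperProd p v w = upperProd p w v ↔ crossProduct v w = 0 := by
  rw [funext_iff, funext_iff]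
  simp only [upperProd_apply, cross_apply, Fin.forall_fin_succ, Fin.isValue, Matrix.cons_val_zero,
    Matrix.cons_val_succ, Matrix.cons_val_fin_one, Pi.zero_apply, sub_eq_zero, forall_const]
  constructor <;> rintro ⟨h0, h1, h2⟩ <;>
    exact ⟨by linear_combination -h2, by linear_combination h1, by linear_combination -h0⟩

lemma card_crossProduct_eq_zero {v : Fin 3 → ZMod p} (hv : v ≠ 0) :
    Nat.card {w // crossProduct v w = 0} = p := by
  have h (w : Fin 3 → ZMod p) : crossProduct v w = 0 ↔ w ∈ Set.range fun a : ZMod p => a • v := by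
    rw [← not_ne_iff, crossProduct_ne_zero_iff_linearIndependent, LinearIndependent.pair_iff' hv]
    simp
  rw [Nat.card_congr (Equiv.subtypeEquivRight h), Nat.card_range_of_injective
    (smul_left_injective _ hv), Nat.card_zmod]

lemma card_upperProd_comm :
    Nat.card {x : (Fin 3 → ZMod p) × (Fin 3 → ZMod p) //
      upperProd p x.1 x.2 = upperProd p x.2 x.1} =
      p ^ 3 + (p ^ 3 - 1) * p := by
  classical
  simp only [upperProd_comm_iff]
  rw [Nat.card_congr (Equiv.subtypeProdEquivSigmaSubtype fun v w => crossProduct v w = 0),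
    Nat.card_sigma, Fintype.sum_eq_add_sum_compl 0,
    Finset.sum_congr rfl fun v hv => card_crossProduct_eq_zero (by simpa using hv)]
  simp [Finset.card_compl]

lemma card_conjClasses : Nat.card (ConjClasses (Heis3 p)) = p ^ 4 + p ^ 3 - p := by
  have h := card_comm_eq_card_conjClasses_mul_card (Heis3 p)
  rw [Heisenberg.card_commute, card_upperProd_comm, Heisenberg.card, Nat.card_prod] at h
  have hpos : 0 < Nat.card (Fin 3 → ZMod p) := Nat.card_pos
  rw [← Nat.eq_of_mul_eq_mul_right (Nat.mul_pos hpos hpos) h, Nat.sub_mul, one_mul,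
    show p ^ 4 = p ^ 3 * p by ring]
  have : p ≤ p ^ 3 * p := Nat.le_mul_of_pos_left p (pow_pos (Fact.out : p.Prime).pos 3)
  omega

lemma closure_eq_top_of_span_eq_top {f : Fin 3 → Heis3 p}
    (hf : Submodule.span (ZMod p) (Set.range fun i => (f i).v) = ⊤) :
    closure (Set.range f) = ⊤ := by
  set H := closure (Set.range f)
  let S : Submodule (ZMod p) (Fin 3 → ZMod p) :=
    { carrier := {v | ∃ z, (⟨v, z⟩ : Heis3 p) ∈ H}
      add_mem' := fun ⟨_, hz⟩ ⟨_, hz'⟩ => ⟨_, H.mul_mem hz hz'⟩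
      zero_mem' := ⟨0, H.one_mem⟩
      smul_mem' := fun t v ⟨z, hz⟩ => ⟨((⟨v, z⟩ : Heis3 p) ^ t.val).z, by
        convert H.pow_mem hz t.val using 1
        ext1
        · simp [Heisenberg.pow_v, ← Nat.cast_smul_eq_nsmul (ZMod p)]
        · rfl⟩ }
  have hS : S = ⊤ := by
    rw [eq_top_iff, ← hf, Submodule.span_le]
    rintro _ ⟨i, rfl⟩
    exact ⟨(f i).z, subset_closure ⟨i, rfl⟩⟩
  exact eq_top_of_forall_exists_mem H fun v => show v ∈ S from hS ▸ Submodule.mem_top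

lemma closure_range_eq_top_iff (f : Fin 3 → Heis3 p) :
    closure (Set.range f) = ⊤ ↔ LinearIndependent (ZMod p) fun i => (f i).v := by
  have hcard : Fintype.card (Fin 3) = Module.finrank (ZMod p) (Fin 3 → ZMod p) := by simp
  refine ⟨fun hf => ?_, fun hf => closure_eq_top_of_span_eq_top
    (hf.span_eq_top_of_card_eq_finrank' hcard)⟩
  exact linearIndependent_of_top_le_span_of_card_eq_finrank
    (Heisenberg.span_eq_top_of_closure_eq_top hf).ge hcard

lemma card_generating :
    Nat.card {f : Fin 3 → Heis3 p // closure (Set.range f) = ⊤} =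
      (p ^ 3 - 1) * (p ^ 3 - p) * (p ^ 3 - p ^ 2) * p ^ 9 := by
  simp only [closure_range_eq_top_iff]
  let e : {f : Fin 3 → Heis3 p // LinearIndependent (ZMod p) fun i => (f i).v} ≃
      {s : Fin 3 → Fin 3 → ZMod p // LinearIndependent (ZMod p) s} × (Fin 3 → Fin 3 → ZMod p) :=
    { toFun f := (⟨fun i => (f.1 i).v, f.2⟩, fun i => (f.1 i).z)
      invFun x := ⟨fun i => ⟨x.1.1 i, x.2 i⟩, x.1.2⟩ }
  rw [Nat.card_congr e, Nat.card_prod, card_linearIndependent (by simp), Fin.prod_univ_three,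
    Nat.card_fun, Nat.card_fun, Nat.card_zmod, Nat.card_fin, ZMod.card,
    Module.finrank_fin_fun, ← pow_mul]
  simp only [Fin.val_zero, Fin.val_one, Fin.val_two, pow_zero, pow_one]

lemma card_mulAut (hp : Odd p) :
    Nat.card (MulAut (Heis3 p)) = (p ^ 3 - 1) * (p ^ 3 - p) * (p ^ 3 - p ^ 2) * p ^ 9 := by
  have hgen : closure (Set.range (gen : Fin 3 → Heis3 p)) = ⊤ := by
    rw [closure_range_eq_top_iff]
    convert (Pi.basisFun (ZMod p) (Fin 3)).linearIndependent
    simp [gen]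
  rw [card_mulAut_eq_card_generating hgen
    fun f => ⟨lift (pow_eq_one hp) Heisenberg.commute_commutatorElement f, lift_gen _ _ f⟩,
    card_generating]

end Heis3

theorem group_6_3_1 (p : ℕ) (hp : p.Prime) (h5 : 5 ≤ p) :
    Nat.card (ConjClasses (ClassTwoGroup p 3 (∅ : Set (FreeGroup (Fin 3))))) = p ^ 4 + p ^ 3 - p ∧
    Nat.card (MulAut (ClassTwoGroup p 3 (∅ : Set (FreeGroup (Fin 3))))) = (p ^ 3 - 1) * (p ^ 3 - p) * (p ^ 3 - p ^ 2) * p ^ 9 := by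
  have := Fact.mk hp
  have hodd : Odd p := hp.odd_of_ne_two (by omega)
  let e := ClassTwoGroup.mulEquivHeis3 hodd
  exact ⟨(Nat.card_congr e.conjClassesCongr).trans Heis3.card_conjClasses,
    (Nat.card_congr (MulAut.congr e).toEquiv).trans (Heis3.card_mulAut hodd)⟩
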